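/- In the setting of the rounding-and-contraction construction, for every edge (s,t) ∈ E one has dist_H(s,t) ≤ (1 + ε₀ + 2ε)·w(s,t); consequently, H is a (1 + ε₀ + 2ε)-spanner of G. -/

import Mathlib

/-!
Write `n = |V|` and `c = εW/n²`. Edges lighter than `c` all lie in `H`, so two vertices of one
contracted component are joined in `H` by a path of weight at most `c` times the size of the
component. Edges of weight at most `W/n` lie in `H` themselves. For a heavier edge `uv`, take a
near-shortest path from the component of `u` to that of `v` in `H'`, and replace each of its edges
`CD` by the lightest edge of `G` between `C` and `D`: rounding loses less than `c` per edge, and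
joining consecutive representatives inside the (pairwise distinct) components of the path costs
at most `nc` in total. Since `G'` has the edge between the components of `u` and `v`, of rounded
weight at most `w(u,v)/c`, this gives `dist_H(u,v) ≤ (1+ε₀)·w(u,v) + 2nc`, and
`2nc = 2εW/n < 2ε·w(u,v)`. Summing the edge bound along walks gives the spanner property.
-/

open scoped BigOperators

namespace Paper

variable {V : Type*}

/-- The weight of a walk: the sum of its edge weights, with multiplicity. -/
noncomputable def wWalk (w : V → V → ℝ) {G : SimpleGraph V} {u v : V} (p : G.Walk u v) : ℝ :=
  (p.darts.map fun d => w d.toProd.1 d.toProd.2).sum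

/-- The distance between two vertices: the infimum of the weights of walks
between them, `⊤` if there is none. -/
noncomputable def gdist (G : SimpleGraph V) (w : V → V → ℝ) (u v : V) : EReal :=
  ⨅ p : G.Walk u v, (wWalk w p : EReal)

/-- `H` is a `t`-spanner of `G` with respect to the weights `w`. -/
def IsSpanner (G : SimpleGraph V) (w : V → V → ℝ) (H : SimpleGraph V) (t : ℝ) : Prop :=
  H ≤ G ∧ ∀ u v : V, gdist H w u v ≤ (t : EReal) * gdist G w u v

/-- The total weight of the edges of a graph. -/
noncomputable def wGraph (G : SimpleGraph V) (w : V → V → ℝ)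
    (hw : ∀ a b, w a b = w b a) : ℝ :=
  ∑ᶠ e ∈ G.edgeSet, Sym2.lift ⟨w, hw⟩ e

/-- The subgraph of `G` consisting of the edges of weight less than `c`. -/
def lightG (G : SimpleGraph V) (w : V → V → ℝ) (c : ℝ) : SimpleGraph V :=
  SimpleGraph.fromRel fun u v => G.Adj u v ∧ w u v < c

/-- The vertices of the contracted graph: connected components spanned by the
edges of weight less than `c`. -/
abbrev CComp (G : SimpleGraph V) (w : V → V → ℝ) (c : ℝ) : Type _ :=
  (lightG G w c).ConnectedComponent

/-- The contraction map. -/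
def cmk (G : SimpleGraph V) (w : V → V → ℝ) (c : ℝ) (u : V) : CComp G w c :=
  (lightG G w c).connectedComponentMk u

/-- The contracted graph `G'`: two distinct components are adjacent iff `G` has an
edge between them. -/
def contrG (G : SimpleGraph V) (w : V → V → ℝ) (c : ℝ) : SimpleGraph (CComp G w c) :=
  SimpleGraph.fromRel fun C D => ∃ u v, G.Adj u v ∧ cmk G w c u = C ∧ cmk G w c v = D

/-- The rounded weight on the contracted graph: `⌊(minimum weight of an edge of `G`
between the two components) · fac⌋`. -/
noncomputable def cW (G : SimpleGraph V) (w : V → V → ℝ) (c fac : ℝ)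
    (C D : CComp G w c) : ℝ :=
  ((⌊sInf {r : ℝ | ∃ u v, G.Adj u v ∧ w u v = r ∧
      ((cmk G w c u = C ∧ cmk G w c v = D) ∨ (cmk G w c u = D ∧ cmk G w c v = C))}
    * fac⌋ : ℤ) : ℝ)

lemma cW_symm (G : SimpleGraph V) (w : V → V → ℝ) (c fac : ℝ) :
    ∀ C D : CComp G w c, cW G w c fac C D = cW G w c fac D C := by
  intro C D
  have h : {r : ℝ | ∃ u v, G.Adj u v ∧ w u v = r ∧
        ((cmk G w c u = C ∧ cmk G w c v = D) ∨ (cmk G w c u = D ∧ cmk G w c v = C))}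
      = {r : ℝ | ∃ u v, G.Adj u v ∧ w u v = r ∧
        ((cmk G w c u = D ∧ cmk G w c v = C) ∨ (cmk G w c u = C ∧ cmk G w c v = D))} := by
    ext r
    constructor <;> (rintro ⟨u, v, h1, h2, h3⟩; exact ⟨u, v, h1, h2, h3.symm⟩)
  unfold cW
  rw [h]

open SimpleGraph

section WalkWeight

variable {G : SimpleGraph V} {w : V → V → ℝ} {u v x : V}

@[simp] lemma wWalk_nil : wWalk w (Walk.nil : G.Walk u u) = 0 := rfl

@[simp] lemma wWalk_cons (h : G.Adj u x) (p : G.Walk x v) :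
    wWalk w (Walk.cons h p) = w u x + wWalk w p := by
  simp [wWalk]

@[simp] lemma wWalk_append (p : G.Walk u x) (q : G.Walk x v) :
    wWalk w (p.append q) = wWalk w p + wWalk w q := by
  simp [wWalk, Walk.darts_append]

@[simp] lemma wWalk_mapLe {G' : SimpleGraph V} (h : G ≤ G') (p : G.Walk u v) :
    wWalk w (p.mapLe h) = wWalk w p := by
  simp [wWalk, Walk.mapLe, Walk.darts_map, Function.comp_def]

lemma wWalk_mul_add (α β : ℝ) (p : G.Walk u v) :
    wWalk (fun a b => α * w a b + β) p = α * wWalk w p + β * p.length := by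
  induction p with
  | nil => simp
  | cons h p ih => simp only [wWalk_cons, ih, Walk.length_cons]; push_cast; ring

lemma wWalk_le_length_mul {c : ℝ} (hle : ∀ a b, G.Adj a b → w a b ≤ c) (p : G.Walk u v) :
    wWalk w p ≤ p.length * c := by
  induction p with
  | nil => simp
  | cons h p ih =>
    simp only [wWalk_cons, Walk.length_cons]
    push_cast
    linarith [hle _ _ h]

lemma wWalk_bypass_le [DecidableEq V] (hw0 : ∀ a b, G.Adj a b → 0 ≤ w a b)
    (p : G.Walk u v) : wWalk w p.bypass ≤ wWalk w p :=
  (p.darts_bypass_sublist_darts.map _).sum_le_sum fun _ hr => by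
    obtain ⟨d, -, rfl⟩ := List.mem_map.1 hr
    exact hw0 _ _ d.adj

lemma gdist_le_wWalk (p : G.Walk u v) : gdist G w u v ≤ wWalk w p :=
  iInf_le _ p

lemma gdist_le_of_adj (h : G.Adj u v) : gdist G w u v ≤ w u v := by
  simpa using gdist_le_wWalk (w := w) (Walk.cons h Walk.nil)

lemma gdist_nonneg (hw0 : ∀ a b, G.Adj a b → 0 ≤ w a b) : 0 ≤ gdist G w u v :=
  le_iInf fun p => EReal.coe_nonneg.2 <| by
    induction p with
    | nil => simp
    | cons h p ih => simpa using add_nonneg (hw0 _ _ h) ih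

lemma gdist_eq_top_or_exists_coe (hw0 : ∀ a b, G.Adj a b → 0 ≤ w a b) :
    gdist G w u v = ⊤ ∨ ∃ r : ℝ, gdist G w u v = r := by
  induction h : gdist G w u v using EReal.rec with
  | bot => exact absurd (h ▸ gdist_nonneg hw0) (by simp)
  | coe r => exact Or.inr ⟨r, rfl⟩
  | top => exact Or.inl rfl

lemma le_of_forall_walk_le {y : EReal} {α β R : ℝ} (hα : 0 < α) (hR : gdist G w u v ≤ R)
    (h : ∀ p : G.Walk u v, y ≤ ((α * wWalk w p + β : ℝ) : EReal)) :
    y ≤ ((α * R + β : ℝ) : EReal) := by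
  refine EReal.le_of_forall_lt_iff_le.1 fun z hz => ?_
  have hlt : gdist G w u v < ((z - β) / α : ℝ) := by
    refine hR.trans_lt (EReal.coe_lt_coe_iff.2 ?_)
    rw [lt_div_iff₀ hα]
    linarith [EReal.coe_lt_coe_iff.1 hz]
  obtain ⟨p, hp⟩ := iInf_lt_iff.1 hlt
  refine (h p).trans (EReal.coe_le_coe_iff.2 ?_)
  rw [EReal.coe_lt_coe_iff, lt_div_iff₀ hα] at hp
  linarith

lemma gdist_triangle (hw0 : ∀ a b, G.Adj a b → 0 ≤ w a b) (u x v : V) :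
    gdist G w u v ≤ gdist G w u x + gdist G w x v := by
  rcases gdist_eq_top_or_exists_coe (u := u) (v := x) hw0 with h₁ | ⟨r, h₁⟩
  · rw [h₁, EReal.top_add_of_ne_bot (EReal.bot_lt_zero.trans_le (gdist_nonneg hw0)).ne']
    exact le_top
  rcases gdist_eq_top_or_exists_coe (u := x) (v := v) hw0 with h₂ | ⟨s, h₂⟩
  · rw [h₂, EReal.add_top_of_ne_bot (EReal.bot_lt_zero.trans_le (gdist_nonneg hw0)).ne']
    exact le_top
  rw [h₁, h₂, ← EReal.coe_add]
  simpa using le_of_forall_walk_le one_pos h₁.le fun p => by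
    simpa [add_comm] using le_of_forall_walk_le one_pos h₂.le fun q => by
      simpa [add_comm] using gdist_le_wWalk (w := w) (p.append q)

lemma isSpanner_of_forall_adj {H : SimpleGraph V} (hHG : H ≤ G)
    (hw0 : ∀ a b, G.Adj a b → 0 ≤ w a b) {t : ℝ} (ht : 0 < t)
    (h : ∀ u v, G.Adj u v → gdist H w u v ≤ ((t * w u v : ℝ) : EReal)) :
    IsSpanner G w H t := by
  have hwalk : ∀ {u v} (p : G.Walk u v), gdist H w u v ≤ ((t * wWalk w p : ℝ) : EReal) := by
    intro u v p
    induction p with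
    | nil => simpa using gdist_le_wWalk (w := w) (Walk.nil : H.Walk _ _)
    | @cons a x b hadj p ih =>
      refine (gdist_triangle (fun a b hab => hw0 a b (hHG hab)) a x b).trans ?_
      simpa [mul_add] using add_le_add (h _ _ hadj) ih
  refine ⟨hHG, fun u v => ?_⟩
  rcases gdist_eq_top_or_exists_coe (u := u) (v := v) hw0 with hT | ⟨r, hr⟩
  · rw [hT, EReal.coe_mul_top_of_pos ht]
    exact le_top
  · rw [hr, ← EReal.coe_mul]
    simpa using le_of_forall_walk_le ht hr.le (β := 0) fun p => by simpa using hwalk p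

end WalkWeight

section Lift

variable [Fintype V] {K H : SimpleGraph V} {w : V → V → ℝ} {c : ℝ}

lemma sum_ncard_supp_le (s : Finset K.ConnectedComponent) :
    ∑ C ∈ s, C.supp.ncard ≤ Fintype.card V := by
  classical
  calc ∑ C ∈ s, C.supp.ncard = ∑ C ∈ s, C.supp.toFinset.card := by
        simp [Set.ncard_eq_toFinset_card']
    _ = (s.biUnion fun C => C.supp.toFinset).card := by
        refine (Finset.card_biUnion fun C _ D _ hCD => ?_).symm
        simpa using K.pairwise_disjoint_supp_connectedComponent hCD
    _ ≤ Fintype.card V := Finset.card_le_univ _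

lemma exists_walk_wWalk_le_ncard_supp_mul (hKw : ∀ a b, K.Adj a b → w a b ≤ c) (hc : 0 ≤ c)
    {x y : V} (h : K.Reachable x y) :
    ∃ p : K.Walk x y, wWalk w p ≤ (K.connectedComponentMk x).supp.ncard * c := by
  classical
  obtain ⟨p⟩ := h
  refine ⟨p.bypass, (wWalk_le_length_mul hKw _).trans ?_⟩
  have hsupp : (p.bypass.support.toFinset : Set V) ⊆ (K.connectedComponentMk x).supp :=
    fun z hz => (ConnectedComponent.eq.2
      ⟨p.bypass.takeUntil z (List.mem_toFinset.1 hz)⟩).symm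
  have hlen : p.bypass.length + 1 ≤ (K.connectedComponentMk x).supp.ncard := by
    rw [← Walk.length_support, ← List.toFinset_card_of_nodup p.bypass_isPath.support_nodup,
      ← Set.ncard_coe_finset]
    exact Set.ncard_le_ncard hsupp
  gcongr
  exact_mod_cast (Nat.le_succ _).trans hlen

variable {H' : SimpleGraph K.ConnectedComponent}
  {ω : K.ConnectedComponent → K.ConnectedComponent → ℝ}
  {F : K.ConnectedComponent → K.ConnectedComponent → V × V}

/-- A walk in the contracted graph lifts to a walk in `H`: each contracted edge `CD` is replaced by
its representative `F C D`, and consecutive representatives are joined inside their component. -/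
lemma exists_walk_lift (hKH : K ≤ H) (hKw : ∀ a b, K.Adj a b → w a b ≤ c) (hc : 0 ≤ c)
    (hF : ∀ C D, H'.Adj C D → H.Adj (F C D).1 (F C D).2 ∧
      K.connectedComponentMk (F C D).1 = C ∧ K.connectedComponentMk (F C D).2 = D ∧
      w (F C D).1 (F C D).2 ≤ ω C D)
    {C D : K.ConnectedComponent} (p' : H'.Walk C D) {a b : V}
    (ha : K.connectedComponentMk a = C) (hb : K.connectedComponentMk b = D) :
    ∃ q : H.Walk a b,
      wWalk w q ≤ wWalk ω p' + ((p'.support.map fun C => C.supp.ncard).sum : ℝ) * c := by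
  induction p' generalizing a with
  | nil =>
    obtain ⟨q, hq⟩ := exists_walk_wWalk_le_ncard_supp_mul hKw hc
      (ConnectedComponent.exact (ha.trans hb.symm))
    exact ⟨q.mapLe hKH, by simpa [ha] using hq⟩
  | @cons C E D hCE p' ih =>
    obtain ⟨hH, hF₁, hF₂, hFω⟩ := hF C E hCE
    obtain ⟨q₁, hq₁⟩ := exists_walk_wWalk_le_ncard_supp_mul hKw hc
      (ConnectedComponent.exact (ha.trans hF₁.symm))
    obtain ⟨q₂, hq₂⟩ := ih hF₂ hb
    refine ⟨(q₁.mapLe hKH).append (Walk.cons hH q₂), ?_⟩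
    simp only [wWalk_append, wWalk_mapLe, wWalk_cons, Walk.support_cons, List.map_cons,
      List.sum_cons, ha] at hq₁ ⊢
    linarith

lemma sum_ncard_supp_le_of_isPath {C D : K.ConnectedComponent} {p : H'.Walk C D}
    (hp : p.IsPath) : (p.support.map fun C => C.supp.ncard).sum ≤ Fintype.card V := by
  classical
  rw [← List.sum_toFinset _ hp.support_nodup]
  exact sum_ncard_supp_le _

lemma length_lt_sum_ncard_supp {C D : K.ConnectedComponent} (p : H'.Walk C D) :
    p.length < (p.support.map fun C => C.supp.ncard).sum := by
  have := List.length_le_sum_of_one_le (p.support.map fun C => C.supp.ncard) <| by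
    simpa [Nat.one_le_iff_ne_zero] using fun C _ => ((Set.ncard_pos).2 C.nonempty_supp).ne'
  simpa using this

lemma gdist_le_of_gdist_components_le (hKH : K ≤ H) (hKw : ∀ a b, K.Adj a b → w a b ≤ c)
    (hc : 0 < c) (hω : ∀ C D, H'.Adj C D → 0 ≤ ω C D)
    (hF : ∀ C D, H'.Adj C D → H.Adj (F C D).1 (F C D).2 ∧
      K.connectedComponentMk (F C D).1 = C ∧ K.connectedComponentMk (F C D).2 = D ∧
      w (F C D).1 (F C D).2 ≤ c * ω C D + c)
    {u v : V} {R : ℝ}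
    (hR : gdist H' ω (K.connectedComponentMk u) (K.connectedComponentMk v) ≤ R) :
    gdist H w u v ≤ ((c * R + 2 * Fintype.card V * c : ℝ) : EReal) := by
  classical
  refine le_of_forall_walk_le hc hR fun p' => ?_
  obtain ⟨q, hq⟩ := exists_walk_lift hKH hKw hc.le hF p'.bypass rfl rfl
  -- the components along a path are distinct, so their sizes add up to at most `n`
  have hsum := sum_ncard_supp_le_of_isPath p'.bypass_isPath
  have hlen := length_lt_sum_ncard_supp p'.bypass
  have hbypass := wWalk_bypass_le hω p'
  refine (gdist_le_wWalk q).trans (EReal.coe_le_coe_iff.2 ?_)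
  rw [wWalk_mul_add] at hq
  have hlen' : (p'.bypass.length : ℝ) ≤ Fintype.card V := by
    exact_mod_cast (hlen.trans_le hsum).le
  have hsum' : (p'.bypass.support.map fun C => (C.supp.ncard : ℝ)).sum ≤ Fintype.card V := by
    simpa [Nat.cast_list_sum, Function.comp_def] using (Nat.cast_le (α := ℝ)).2 hsum
  linarith [mul_le_mul_of_nonneg_left hbypass hc.le, mul_le_mul_of_nonneg_left hlen' hc.le,
    mul_le_mul_of_nonneg_right hsum' hc.le]

end Lift

section Construction

variable {G : SimpleGraph V} {w : V → V → ℝ} {c fac : ℝ}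

lemma lightG_adj (hw : ∀ a b, w a b = w b a) {a b : V} :
    (lightG G w c).Adj a b ↔ G.Adj a b ∧ w a b < c := by
  rw [lightG, fromRel_adj]
  constructor
  · rintro ⟨-, ⟨hab, hlt⟩ | ⟨hba, hlt⟩⟩
    · exact ⟨hab, hlt⟩
    · exact ⟨hba.symm, hw a b ▸ hlt⟩
  · rintro ⟨hab, hlt⟩
    exact ⟨hab.ne, Or.inl ⟨hab, hlt⟩⟩

def crossWeights (G : SimpleGraph V) (w : V → V → ℝ) (c : ℝ) (C D : CComp G w c) :
    Set ℝ :=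
  {r : ℝ | ∃ u v, G.Adj u v ∧ w u v = r ∧
    ((cmk G w c u = C ∧ cmk G w c v = D) ∨ (cmk G w c u = D ∧ cmk G w c v = C))}

lemma cW_eq_floor (C D : CComp G w c) :
    cW G w c fac C D = ⌊sInf (crossWeights G w c C D) * fac⌋ := rfl

lemma cW_nonneg (hw0 : ∀ a b, G.Adj a b → 0 ≤ w a b) (hfac : 0 ≤ fac) (C D : CComp G w c) :
    0 ≤ cW G w c fac C D := by
  rw [cW_eq_floor]
  have hinf : 0 ≤ sInf (crossWeights G w c C D) :=
    Real.sInf_nonneg fun _ ⟨a, b, hab, hr, _⟩ => hr ▸ hw0 a b hab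
  exact_mod_cast Int.floor_nonneg.2 (mul_nonneg hinf hfac)

lemma cW_le_mul (hw0 : ∀ a b, G.Adj a b → 0 ≤ w a b) (hfac : 0 ≤ fac) {u v : V}
    (huv : G.Adj u v) : cW G w c fac (cmk G w c u) (cmk G w c v) ≤ w u v * fac := by
  have hbdd : BddBelow (crossWeights G w c (cmk G w c u) (cmk G w c v)) :=
    ⟨0, fun _ ⟨a, b, hab, hr, _⟩ => hr ▸ hw0 a b hab⟩
  rw [cW_eq_floor]
  exact (Int.floor_le _).trans <| mul_le_mul_of_nonneg_right
    (csInf_le hbdd ⟨u, v, huv, rfl, Or.inl ⟨rfl, rfl⟩⟩) hfac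

lemma lt_cW_add_one (hw : ∀ a b, w a b = w b a) {C D : CComp G w c} {x y : V}
    (hxy : G.Adj x y) (hx : cmk G w c x = C) (hy : cmk G w c y = D)
    (hmin : ∀ u v, G.Adj u v → cmk G w c u = C → cmk G w c v = D → w x y ≤ w u v) :
    w x y * fac < cW G w c fac C D + 1 := by
  have hinf : sInf (crossWeights G w c C D) = w x y := by
    refine IsLeast.csInf_eq ⟨⟨x, y, hxy, rfl, Or.inl ⟨hx, hy⟩⟩, ?_⟩
    rintro _ ⟨u, v, huv, rfl, ⟨hu, hv⟩ | ⟨hu, hv⟩⟩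
    · exact hmin u v huv hu hv
    · exact hw u v ▸ hmin v u huv.symm hv hu
  rw [cW_eq_floor, hinf]
  exact Int.lt_floor_add_one _

lemma gdist_contrG_le {H' : SimpleGraph (CComp G w c)} {t : ℝ}
    (hw0 : ∀ a b, G.Adj a b → 0 ≤ w a b) (hfac : 0 ≤ fac) (ht : 0 ≤ t)
    (hH' : IsSpanner (contrG G w c) (cW G w c fac) H' t) {u v : V} (huv : G.Adj u v) :
    gdist H' (cW G w c fac) (cmk G w c u) (cmk G w c v)
      ≤ ((t * cW G w c fac (cmk G w c u) (cmk G w c v) : ℝ) : EReal) := by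
  by_cases h : cmk G w c u = cmk G w c v
  · rw [h]
    exact (gdist_le_wWalk Walk.nil).trans
      (EReal.coe_le_coe_iff.2 (mul_nonneg ht (cW_nonneg hw0 hfac _ _)))
  · have hadj : (contrG G w c).Adj (cmk G w c u) (cmk G w c v) := by
      rw [contrG, fromRel_adj]
      exact ⟨h, Or.inl ⟨u, v, huv, rfl, rfl⟩⟩
    rw [EReal.coe_mul]
    exact (hH'.2 _ _).trans
      (mul_le_mul_of_nonneg_left (gdist_le_of_adj hadj) (EReal.coe_nonneg.2 ht))

/-- The graph `H` of the construction, with the weight threshold `W / n` generalised to `L`. -/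
def liftedSpanner (G : SimpleGraph V) (w : V → V → ℝ) (hw : ∀ a b, w a b = w b a) (L : ℝ)
    (H' : SimpleGraph (CComp G w c)) (F : CComp G w c → CComp G w c → V × V) :
    SimpleGraph V :=
  SimpleGraph.fromEdgeSet
    ({e ∈ G.edgeSet | Sym2.lift ⟨w, hw⟩ e ≤ L} ∪
     {e | ∃ C D, H'.Adj C D ∧ e = s((F C D).1, (F C D).2)})

variable {hw : ∀ a b, w a b = w b a} {L : ℝ} {H' : SimpleGraph (CComp G w c)}
  {F : CComp G w c → CComp G w c → V × V}

lemma liftedSpanner_le (hFadj : ∀ C D, H'.Adj C D → G.Adj (F C D).1 (F C D).2) :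
    liftedSpanner G w hw L H' F ≤ G := by
  intro a b hab
  rw [liftedSpanner, fromEdgeSet_adj] at hab
  rcases hab.1 with ⟨hG, -⟩ | ⟨C, D, hCD, he⟩
  · exact hG
  · rw [← mem_edgeSet, he]
    exact hFadj C D hCD

lemma liftedSpanner_adj_of_le {u v : V} (huv : G.Adj u v) (hL : w u v ≤ L) :
    (liftedSpanner G w hw L H' F).Adj u v := by
  rw [liftedSpanner, fromEdgeSet_adj]
  exact ⟨Or.inl ⟨huv, hL⟩, huv.ne⟩

lemma liftedSpanner_adj_rep {C D : CComp G w c} (hCD : H'.Adj C D)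
    (hG : G.Adj (F C D).1 (F C D).2) :
    (liftedSpanner G w hw L H' F).Adj (F C D).1 (F C D).2 := by
  rw [liftedSpanner, fromEdgeSet_adj]
  exact ⟨Or.inr ⟨C, D, hCD, rfl⟩, hG.ne⟩

lemma lightG_le_liftedSpanner (hcL : c ≤ L) : lightG G w c ≤ liftedSpanner G w hw L H' F :=
  fun _ _ hab => have h := (lightG_adj hw).1 hab
    liftedSpanner_adj_of_le h.1 (h.2.le.trans hcL)

theorem gdist_liftedSpanner_le [Fintype V] {ε ε₀ : ℝ}
    (hw0 : ∀ a b, G.Adj a b → 0 ≤ w a b) (hc : 0 < c) (hcfac : c * fac = 1) (hcL : c ≤ L)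
    (hnc : Fintype.card V * c ≤ ε * L) (hε : 0 ≤ ε) (hε₀ : 0 ≤ ε₀)
    (hH' : IsSpanner (contrG G w c) (cW G w c fac) H' (1 + ε₀))
    (hFadj : ∀ C D, H'.Adj C D → G.Adj (F C D).1 (F C D).2 ∧
        cmk G w c (F C D).1 = C ∧ cmk G w c (F C D).2 = D)
    (hFmin : ∀ C D, H'.Adj C D → ∀ u v : V, G.Adj u v →
        cmk G w c u = C → cmk G w c v = D → w (F C D).1 (F C D).2 ≤ w u v)
    {u v : V} (huv : G.Adj u v) :
    gdist (liftedSpanner G w hw L H' F) w u v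
      ≤ (((1 + ε₀ + 2 * ε) * w u v : ℝ) : EReal) := by
  by_cases hL : w u v ≤ L
  · exact (gdist_le_of_adj (liftedSpanner_adj_of_le huv hL)).trans
      (EReal.coe_le_coe_iff.2 (by nlinarith [hw0 u v huv]))
  have hfac : 0 ≤ fac := (pos_of_mul_pos_right (hcfac ▸ one_pos) hc.le).le
  have hcancel : ∀ r, c * (r * fac) = r := fun r => by
    rw [mul_comm, mul_assoc, mul_comm fac, hcfac, mul_one]
  have hrep : ∀ C D, H'.Adj C D → (liftedSpanner G w hw L H' F).Adj (F C D).1 (F C D).2 ∧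
      cmk G w c (F C D).1 = C ∧ cmk G w c (F C D).2 = D ∧
      w (F C D).1 (F C D).2 ≤ c * cW G w c fac C D + c := by
    intro C D hCD
    obtain ⟨hG, h₁, h₂⟩ := hFadj C D hCD
    refine ⟨liftedSpanner_adj_rep hCD hG, h₁, h₂, ?_⟩
    have hlt := lt_cW_add_one (fac := fac) hw hG h₁ h₂ (hFmin C D hCD)
    calc w (F C D).1 (F C D).2 = c * (w (F C D).1 (F C D).2 * fac) := (hcancel _).symm
      _ ≤ c * (cW G w c fac C D + 1) := mul_le_mul_of_nonneg_left hlt.le hc.le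
      _ = c * cW G w c fac C D + c := by ring
  have hdist := gdist_le_of_gdist_components_le (lightG_le_liftedSpanner hcL)
    (fun a b h => ((lightG_adj hw).1 h).2.le) hc (fun C D _ => cW_nonneg hw0 hfac C D)
    hrep (gdist_contrG_le hw0 hfac (by linarith) hH' huv)
  refine hdist.trans (EReal.coe_le_coe_iff.2 ?_)
  have hround : c * cW G w c fac (cmk G w c u) (cmk G w c v) ≤ w u v := by
    calc _ ≤ c * (w u v * fac) := mul_le_mul_of_nonneg_left (cW_le_mul hw0 hfac huv) hc.le
      _ = w u v := hcancel _
  have hsmall : Fintype.card V * c ≤ ε * w u v :=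
    hnc.trans (mul_le_mul_of_nonneg_left (not_le.1 hL).le hε)
  nlinarith [mul_le_mul_of_nonneg_left hround (by linarith : (0 : ℝ) ≤ 1 + ε₀)]

end Construction

/-- in the rounding-and-contraction construction, the resulting subgraph
`H` of `G` satisfies `dist_H(s,t) ≤ (1+ε₀+2ε)·w(s,t)` for every edge `(s,t)` of `G`;
consequently `H` is a `(1+ε₀+2ε)`-spanner of `G`. -/
theorem statement12 [Fintype V] (G : SimpleGraph V) (w : V → V → ℝ)
    (hw : ∀ a b, w a b = w b a)
    (W : ℕ) (hWpos : 0 < W)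
    (hint : ∀ u v : V, G.Adj u v → ∃ m : ℕ, 1 ≤ m ∧ m ≤ W ∧ w u v = m)
    (hn : 2 ≤ Fintype.card V)
    (ε : ℝ) (hε0 : 0 < ε) (hε : ε ≤ 1/2) (ε₀ : ℝ) (hε₀ : 0 < ε₀)
    (H' : SimpleGraph (CComp G w (ε * W / (Fintype.card V : ℝ)^2)))
    (hH' : IsSpanner (contrG G w (ε * W / (Fintype.card V : ℝ)^2))
        (cW G w (ε * W / (Fintype.card V : ℝ)^2) ((Fintype.card V : ℝ)^2 / (W * ε)))
        H' (1 + ε₀))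
    (F : CComp G w (ε * W / (Fintype.card V : ℝ)^2) →
         CComp G w (ε * W / (Fintype.card V : ℝ)^2) → V × V)
    (hFadj : ∀ C D, H'.Adj C D → G.Adj (F C D).1 (F C D).2 ∧
        cmk G w _ (F C D).1 = C ∧ cmk G w _ (F C D).2 = D)
    (hFmin : ∀ C D, H'.Adj C D → ∀ u v : V, G.Adj u v →
        cmk G w _ u = C → cmk G w _ v = D → w (F C D).1 (F C D).2 ≤ w u v)
    (H : SimpleGraph V)
    (hHdef : H = SimpleGraph.fromEdgeSet
        ({e ∈ G.edgeSet | Sym2.lift ⟨w, hw⟩ e ≤ (W : ℝ) / (Fintype.card V : ℝ)} ∪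
         {e | ∃ C D, H'.Adj C D ∧ e = s((F C D).1, (F C D).2)})) :
    (∀ u v : V, G.Adj u v →
      gdist H w u v ≤ (((1 + ε₀ + 2 * ε) * w u v : ℝ) : EReal)) ∧
    IsSpanner G w H (1 + ε₀ + 2 * ε) := by
  obtain rfl : H = liftedSpanner G w hw (W / Fintype.card V) H' F := hHdef
  have hnR : (2 : ℝ) ≤ Fintype.card V := by exact_mod_cast hn
  have hW : (0 : ℝ) < W := by exact_mod_cast hWpos
  have hw0 : ∀ a b, G.Adj a b → 0 ≤ w a b := fun a b hab => by
    obtain ⟨m, -, -, hm⟩ := hint a b hab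
    exact hm ▸ m.cast_nonneg
  have hcL : ε * W / (Fintype.card V : ℝ) ^ 2 ≤ W / Fintype.card V := by
    rw [div_le_div_iff₀ (by positivity) (by positivity)]
    nlinarith [mul_pos hW (by positivity : (0 : ℝ) < Fintype.card V)]
  have hnc : Fintype.card V * (ε * W / (Fintype.card V : ℝ) ^ 2) ≤ ε * (W / Fintype.card V) :=
    le_of_eq (by field_simp)
  have hedge : ∀ u v, G.Adj u v → gdist (liftedSpanner G w hw (W / Fintype.card V) H' F) w u v
      ≤ (((1 + ε₀ + 2 * ε) * w u v : ℝ) : EReal) := fun u v huv =>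
    gdist_liftedSpanner_le hw0 (by positivity) (by field_simp) hcL hnc hε0.le hε₀.le hH' hFadj
      hFmin huv
  exact ⟨hedge, isSpanner_of_forall_adj (liftedSpanner_le fun C D h => (hFadj C D h).1) hw0
    (by positivity) hedge⟩

end Paper
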